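/- If A and B are skew shapes with supp(A) = supp(B), then A and B have the same number of connected components. -/

import Mathlib

/-- A skew shape `outer / inner`: the boxes of the Young diagram of `outer`
that are not boxes of the Young diagram of `inner`. -/
structure SkewShape where
  outer : YoungDiagram
  inner : YoungDiagram
  inner_le : inner ≤ outer

namespace SkewShape

/-- The set of boxes of a skew shape. -/
def cells (A : SkewShape) : Finset (ℕ × ℕ) := A.outer.cells \ A.inner.cells

/-- The size of a skew shape is its number of boxes. -/
def size (A : SkewShape) : ℕ := A.cells.card

/-- The length of row `i` of a skew shape. -/
def rowLen (A : SkewShape) (i : ℕ) : ℕ := (A.cells.filter fun c => c.1 = i).card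

/-- The length of column `j` of a skew shape. -/
def colLen (A : SkewShape) (j : ℕ) : ℕ := (A.cells.filter fun c => c.2 = j).card

/-- The set of indices of nonempty rows. -/
def rowSet (A : SkewShape) : Finset ℕ := A.cells.image Prod.fst

/-- The set of indices of nonempty columns. -/
def colSet (A : SkewShape) : Finset ℕ := A.cells.image Prod.snd

/-- The number of nonempty rows. -/
def numRows (A : SkewShape) : ℕ := A.rowSet.card

/-- The number of nonempty columns. -/
def numCols (A : SkewShape) : ℕ := A.colSet.card

/-- `rows A`: the multiset of lengths of the nonempty rows of `A`
(equivalently, that sequence sorted into weakly decreasing order). -/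
def rows (A : SkewShape) : Multiset ℕ := A.rowSet.val.map A.rowLen

/-- `cols A`: the multiset of lengths of the nonempty columns of `A`. -/
def cols (A : SkewShape) : Multiset ℕ := A.colSet.val.map A.colLen

/-- A skew shape is disconnected if its boxes can be split into two nonempty
parts such that no box of one part shares a row or a column with a box of the
other part. -/
def Disconnected (A : SkewShape) : Prop :=
  ∃ B C : Finset (ℕ × ℕ), B.Nonempty ∧ C.Nonempty ∧ B ∪ C = A.cells ∧ B ∩ C = ∅ ∧
    ∀ b ∈ B, ∀ c ∈ C, b.1 ≠ c.1 ∧ b.2 ≠ c.2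

/-- A skew shape is connected if it is nonempty and not disconnected. -/
def Connected (A : SkewShape) : Prop := A.cells.Nonempty ∧ ¬ A.Disconnected

/-- A ribbon is a connected skew shape containing no 2×2 block of boxes. -/
def Ribbon (A : SkewShape) : Prop :=
  A.Connected ∧ ∀ i j : ℕ, ¬ ((i, j) ∈ A.cells ∧ (i, j + 1) ∈ A.cells ∧
    (i + 1, j) ∈ A.cells ∧ (i + 1, j + 1) ∈ A.cells)

/-- The lengths of any two nonempty rows differ by at most one. -/
def RowEquitable (A : SkewShape) : Prop :=
  ∀ i ∈ A.rowSet, ∀ i' ∈ A.rowSet, A.rowLen i ≤ A.rowLen i' + 1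

/-- The lengths of any two nonempty columns differ by at most one. -/
def ColEquitable (A : SkewShape) : Prop :=
  ∀ j ∈ A.colSet, ∀ j' ∈ A.colSet, A.colLen j ≤ A.colLen j' + 1

/-- Equitable: both row equitable and column equitable. -/
def Equitable (A : SkewShape) : Prop := A.RowEquitable ∧ A.ColEquitable

/-- A filling of a skew shape is semistandard if its entries are positive
integers, weakly increasing along rows and strictly increasing down columns. -/
def IsSsyt (A : SkewShape) (T : ℕ × ℕ → ℕ) : Prop :=
  (∀ c ∈ A.cells, 1 ≤ T c) ∧
  (∀ i j j', (i, j) ∈ A.cells → (i, j') ∈ A.cells → j ≤ j' → T (i, j) ≤ T (i, j')) ∧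
  (∀ i i' j, (i, j) ∈ A.cells → (i', j) ∈ A.cells → i < i' → T (i, j) < T (i', j))

end SkewShape

/-- `c` comes weakly before `d` in the reverse reading order (right to left
along rows, rows top to bottom). -/
def ReadsBefore (c d : ℕ × ℕ) : Prop := c.1 < d.1 ∨ (c.1 = d.1 ∧ d.2 ≤ c.2)

instance : DecidableRel ReadsBefore := fun c d => by unfold ReadsBefore; infer_instance

namespace SkewShape

/-- The number of boxes of `A` filled with the entry `k` by the filling `T`. -/
def content (A : SkewShape) (T : ℕ × ℕ → ℕ) (k : ℕ) : ℕ :=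
  (A.cells.filter fun c => T c = k).card

/-- A Littlewood--Richardson filling: a semistandard filling such that every
prefix of the reverse reading word contains at least as many `k`'s as
`(k+1)`'s, for every positive `k`. -/
def IsLR (A : SkewShape) (T : ℕ × ℕ → ℕ) : Prop :=
  A.IsSsyt T ∧ ∀ d ∈ A.cells, ∀ k : ℕ,
    (A.cells.filter fun c => T c = k + 2 ∧ ReadsBefore c d).card ≤
    (A.cells.filter fun c => T c = k + 1 ∧ ReadsBefore c d).card

end SkewShape

/-- The `i`-th largest part (0-indexed) of a multiset of natural numbers,
i.e. the `i`-th entry of the multiset sorted into weakly decreasing order. -/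
def part (lam : Multiset ℕ) (i : ℕ) : ℕ := (lam.sort (· ≥ ·)).getD i 0

namespace SkewShape

/-- The support of a skew shape `A`: the set of partitions `lam` (multisets of
positive integers) for which there exists an LR filling of `A` of content `lam`. -/
def supp (A : SkewShape) : Set (Multiset ℕ) :=
  {lam | 0 ∉ lam ∧ ∃ T : ℕ × ℕ → ℕ, A.IsLR T ∧ ∀ i : ℕ, A.content T (i + 1) = part lam i}

/-- The set of LR fillings of `A` of content `lam` (normalized to vanish
outside the boxes of `A`). -/
def LRset (A : SkewShape) (lam : Multiset ℕ) : Set ((ℕ × ℕ) → ℕ) :=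
  {T | A.IsLR T ∧ (∀ c, c ∉ A.cells → T c = 0) ∧ ∀ i : ℕ, A.content T (i + 1) = part lam i}

/-- `s_A − s_B` is Schur-positive: for every partition, the number of LR
fillings of `B` of that content is at most the number for `A`. -/
def SchurPosDiff (A B : SkewShape) : Prop :=
  ∀ lam : Multiset ℕ, (B.LRset lam).ncard ≤ (A.LRset lam).ncard

end SkewShape

/-- The sum of the `k` largest parts of a multiset of natural numbers. -/
def psum (lam : Multiset ℕ) (k : ℕ) : ℕ := ((lam.sort (· ≥ ·)).take k).sum

/-- Dominance order: `DomLe lam mu` means `lam ⊴ mu`, i.e. for every `k` the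
sum of the `k` largest parts of `lam` is at most that of `mu`. -/
def DomLe (lam mu : Multiset ℕ) : Prop := ∀ k : ℕ, psum lam k ≤ psum mu k

/-- The conjugate (transpose) of a partition given as a multiset: its parts
are the numbers `#{x ∈ lam | x ≥ j}` for `j = 1, 2, …`. -/
def conj (lam : Multiset ℕ) : Multiset ℕ :=
  ((Finset.range lam.sum).val.map fun j => Multiset.card (lam.filter fun x => j + 1 ≤ x)).filter
    fun y => y ≠ 0

namespace SkewShape

/-- Two boxes of `A` are adjacent if both lie in `A` and they share a row or a
column. -/
def Adj (A : SkewShape) (c d : ℕ × ℕ) : Prop :=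
  c ∈ A.cells ∧ d ∈ A.cells ∧ (c.1 = d.1 ∨ c.2 = d.2)

/-- The number of connected components of a skew shape: the number of distinct
classes of boxes under the transitive closure of adjacency. -/
noncomputable def numComponents (A : SkewShape) : ℕ :=
  Set.ncard {S : Set (ℕ × ℕ) | ∃ c ∈ A.cells, S = {d | Relation.ReflTransGen A.Adj c d}}

end SkewShape

namespace SkewShape

variable (A : SkewShape)

/-- Membership in the cells of a skew shape, in terms of row lengths. -/
lemma mem_cells_iff {i j : ℕ} :
    (i, j) ∈ A.cells ↔ A.inner.rowLen i ≤ j ∧ j < A.outer.rowLen i := by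
  rw [cells, Finset.mem_sdiff, YoungDiagram.mem_cells, YoungDiagram.mem_cells,
    YoungDiagram.mem_iff_lt_rowLen, YoungDiagram.mem_iff_lt_rowLen]
  omega

lemma mem_rowSet_iff {i : ℕ} :
    i ∈ A.rowSet ↔ A.inner.rowLen i < A.outer.rowLen i := by
  constructor
  · rintro h
    rw [rowSet, Finset.mem_image] at h
    obtain ⟨⟨c1, c2⟩, hc, rfl⟩ := h
    rw [mem_cells_iff] at hc
    exact lt_of_le_of_lt hc.1 hc.2
  · intro h
    rw [rowSet, Finset.mem_image]
    exact ⟨(i, A.inner.rowLen i), (A.mem_cells_iff).2 ⟨le_refl _, h⟩, rfl⟩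

lemma fst_mem_rowSet {x : ℕ × ℕ} (hx : x ∈ A.cells) : x.1 ∈ A.rowSet :=
  Finset.mem_image_of_mem _ hx

lemma snd_mem_colSet {x : ℕ × ℕ} (hx : x ∈ A.cells) : x.2 ∈ A.colSet :=
  Finset.mem_image_of_mem _ hx

lemma inner_le_of_mem {x : ℕ × ℕ} (hx : x ∈ A.cells) : A.inner.rowLen x.1 ≤ x.2 := by
  obtain ⟨i, j⟩ := x; exact ((A.mem_cells_iff).1 hx).1

lemma lt_outer_of_mem {x : ℕ × ℕ} (hx : x ∈ A.cells) : x.2 < A.outer.rowLen x.1 := by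
  obtain ⟨i, j⟩ := x; exact ((A.mem_cells_iff).1 hx).2

/-- The rank of a row: number of nonempty rows strictly above it. -/
def rank (i : ℕ) : ℕ := (A.rowSet.filter (· < i)).card

lemma rank_lt_rank {i i' : ℕ} (hi : i ∈ A.rowSet) (hii : i < i') :
    A.rank i < A.rank i' := by
  apply Finset.card_lt_card
  constructor
  · intro a ha
    rw [Finset.mem_filter] at ha ⊢
    exact ⟨ha.1, lt_trans ha.2 hii⟩
  · intro hsub
    have : i ∈ A.rowSet.filter (· < i') := Finset.mem_filter.2 ⟨hi, hii⟩
    have := hsub this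
    rw [Finset.mem_filter] at this
    omega

lemma rank_le_rank {i i' : ℕ} (hii : i ≤ i') : A.rank i ≤ A.rank i' := by
  apply Finset.card_le_card
  intro a ha
  rw [Finset.mem_filter] at ha ⊢
  exact ⟨ha.1, lt_of_lt_of_le ha.2 hii⟩

lemma rank_injOn {i i' : ℕ} (hi : i ∈ A.rowSet) (hi' : i' ∈ A.rowSet)
    (h : A.rank i = A.rank i') : i = i' := by
  rcases lt_trichotomy i i' with hl | he | hl
  · exact absurd h (Nat.ne_of_lt (A.rank_lt_rank hi hl))
  · exact he
  · exact absurd h.symm (Nat.ne_of_lt (A.rank_lt_rank hi' hl))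

lemma rank_lt_numRows {i : ℕ} (hi : i ∈ A.rowSet) : A.rank i < A.numRows := by
  apply Finset.card_lt_card
  constructor
  · exact Finset.filter_subset _ _
  · intro hsub
    have := Finset.mem_filter.1 (hsub hi)
    omega

/-- Ranks attain every value below `numRows`. -/
lemma exists_rank_eq {k : ℕ} (hk : k < A.numRows) : ∃ i ∈ A.rowSet, A.rank i = k := by
  induction k with
  | zero =>
    have hne : A.rowSet.Nonempty := Finset.card_pos.1 hk
    obtain ⟨i, hi, hmin⟩ := A.rowSet.exists_min_image id hne
    refine ⟨i, hi, ?_⟩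
    rw [rank, Finset.card_eq_zero, Finset.filter_eq_empty_iff]
    intro a ha
    have := hmin a ha
    simp only [id] at this
    omega
  | succ k ih =>
    obtain ⟨i, hi, hik⟩ := ih (by omega)
    -- there is a nonempty row strictly below i
    have hex : ∃ b ∈ A.rowSet, i < b := by
      by_contra hno
      push_neg at hno
      have : A.rowSet ⊆ A.rowSet.filter (· < i + 1) := by
        intro a ha
        exact Finset.mem_filter.2 ⟨ha, by have := hno a ha; omega⟩
      have h1 : A.numRows ≤ (A.rowSet.filter (· < i + 1)).card :=
        Finset.card_le_card this
      have h2 : (A.rowSet.filter (· < i + 1)).card ≤ A.rank i + 1 := by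
        rw [rank]
        have : A.rowSet.filter (· < i + 1) ⊆ insert i (A.rowSet.filter (· < i)) := by
          intro a ha
          rw [Finset.mem_filter] at ha
          rcases Nat.lt_or_ge a i with h | h
          · exact Finset.mem_insert.2 (Or.inr (Finset.mem_filter.2 ⟨ha.1, h⟩))
          · have : a = i := by omega
            exact Finset.mem_insert.2 (Or.inl this)
        calc (A.rowSet.filter (· < i + 1)).card ≤ _ := Finset.card_le_card this
          _ ≤ _ := Finset.card_insert_le _ _
      omega
    -- take the least such b
    obtain ⟨b, hb, hmin⟩ := (A.rowSet.filter (i < ·)).exists_min_image id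
      (by obtain ⟨b, hb1, hb2⟩ := hex; exact ⟨b, Finset.mem_filter.2 ⟨hb1, hb2⟩⟩)
    rw [Finset.mem_filter] at hb
    refine ⟨b, hb.1, ?_⟩
    have : A.rowSet.filter (· < b) = insert i (A.rowSet.filter (· < i)) := by
      apply Finset.ext
      intro a
      rw [Finset.mem_filter, Finset.mem_insert, Finset.mem_filter]
      constructor
      · rintro ⟨ha, hab⟩
        rcases Nat.lt_or_ge a i with h | h
        · exact Or.inr ⟨ha, h⟩
        · rcases Nat.eq_or_lt_of_le h with h' | h'
          · exact Or.inl h'.symm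
          · exfalso
            have := hmin a (Finset.mem_filter.2 ⟨ha, h'⟩)
            simp only [id] at this
            omega
      · rintro (rfl | ⟨ha, hai⟩)
        · exact ⟨hi, hb.2⟩
        · exact ⟨ha, by omega⟩
    rw [rank, this, Finset.card_insert_of_notMem (by
      intro hmem; have := (Finset.mem_filter.1 hmem).2; omega)]
    rw [rank] at hik
    omega

lemma rowLen_outer_anti {i i' : ℕ} (h : i ≤ i') :
    A.outer.rowLen i' ≤ A.outer.rowLen i := A.outer.rowLen_anti i i' h

lemma rowLen_inner_anti {i i' : ℕ} (h : i ≤ i') :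
    A.inner.rowLen i' ≤ A.inner.rowLen i := A.inner.rowLen_anti i i' h

end SkewShape
namespace SkewShape

variable (A : SkewShape)

/-- Rows starting a new connected block: nonempty rows that have a nonempty row above
them but share no column with any nonempty row above. -/
def brks : Finset ℕ :=
  A.rowSet.filter (fun b => (∃ a ∈ A.rowSet, a < b) ∧
    ∀ a ∈ A.rowSet, a < b → A.outer.rowLen b ≤ A.inner.rowLen a)

lemma mem_brks_iff {b : ℕ} : b ∈ A.brks ↔ b ∈ A.rowSet ∧ (∃ a ∈ A.rowSet, a < b) ∧
    ∀ a ∈ A.rowSet, a < b → A.outer.rowLen b ≤ A.inner.rowLen a := by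
  rw [brks, Finset.mem_filter]

/-- Number of breaks. -/
def nbrks : ℕ := A.brks.card

/-- Cells with no cell above them in their column. -/
def tops : Finset (ℕ × ℕ) :=
  A.cells.filter (fun x => ∀ i' ∈ Finset.range x.1, (i', x.2) ∉ A.cells)

lemma mem_tops_iff {x : ℕ × ℕ} :
    x ∈ A.tops ↔ x ∈ A.cells ∧ ∀ i' < x.1, (i', x.2) ∉ A.cells := by
  rw [tops, Finset.mem_filter]
  simp only [Finset.mem_range]

/-- Each nonempty column contains a unique top cell. -/
lemma tops_card : A.tops.card = A.numCols := by
  rw [numCols]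
  apply Finset.card_bij (fun x _ => x.2)
  · intro x hx
    exact A.snd_mem_colSet ((A.mem_tops_iff.1 hx).1)
  · intro x hx y hy hxy
    rw [mem_tops_iff] at hx hy
    rcases Nat.lt_trichotomy x.1 y.1 with h | h | h
    · exact absurd (hxy ▸ hx.1) (hy.2 x.1 h)
    · exact Prod.ext h hxy
    · exact absurd (hxy.symm ▸ hy.1) (hx.2 y.1 h)
  · intro j hj
    rw [colSet, Finset.mem_image] at hj
    obtain ⟨c, hc, rfl⟩ := hj
    -- take min row in this column
    obtain ⟨x, hx, hmin⟩ := (A.cells.filter (fun y => y.2 = c.2)).exists_min_image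
      Prod.fst ⟨c, Finset.mem_filter.2 ⟨hc, rfl⟩⟩
    rw [Finset.mem_filter] at hx
    refine ⟨x, ?_, hx.2⟩
    rw [mem_tops_iff]
    refine ⟨hx.1, fun i' hi' hmem => ?_⟩
    have := hmin (i', x.2) (Finset.mem_filter.2 ⟨hmem, hx.2⟩)
    simp only at this
    omega

/-- A top cell at the end of its row with positive rank is exactly a break row's cell. -/
lemma top_last_iff_brk {i : ℕ} (hi : i ∈ A.rowSet) :
    ((i, A.outer.rowLen i - 1) ∈ A.tops ∧ 0 < A.rank i) ↔ i ∈ A.brks := by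
  have hrow := (A.mem_rowSet_iff).1 hi
  have hcell : (i, A.outer.rowLen i - 1) ∈ A.cells := A.mem_cells_iff.2 (by omega)
  rw [mem_tops_iff, mem_brks_iff]
  constructor
  · rintro ⟨⟨-, htop⟩, hrk⟩
    have hex : ∃ a ∈ A.rowSet, a < i := by
      rw [rank, Finset.card_pos] at hrk
      obtain ⟨a, ha⟩ := hrk
      rw [Finset.mem_filter] at ha
      exact ⟨a, ha.1, ha.2⟩
    refine ⟨hi, hex, fun a ha hai => ?_⟩
    by_contra hlt
    push_neg at hlt
    apply htop a hai
    rw [mem_cells_iff]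
    have : A.outer.rowLen i ≤ A.outer.rowLen a := A.rowLen_outer_anti (le_of_lt hai)
    omega
  · rintro ⟨-, ⟨a, ha, hai⟩, hall⟩
    refine ⟨⟨hcell, fun i' hi' hmem => ?_⟩, ?_⟩
    · rw [mem_cells_iff] at hmem
      have hi'row : i' ∈ A.rowSet := by
        rw [mem_rowSet_iff]; omega
      have := hall i' hi'row hi'
      omega
    · rw [rank, Finset.card_pos]
      exact ⟨a, Finset.mem_filter.2 ⟨ha, hai⟩⟩

lemma brks_subset_rowSet : A.brks ⊆ A.rowSet := Finset.filter_subset _ _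

/-- blockId of a row. -/
def blockId (i : ℕ) : ℕ := (A.brks.filter (· ≤ i)).card

lemma nbrks_le_numCols : A.nbrks ≤ A.numCols := by
  rw [← A.tops_card, nbrks]
  apply Finset.card_le_card_of_injOn (fun b => (b, A.outer.rowLen b - 1))
  · intro b hb
    exact ((A.top_last_iff_brk (A.brks_subset_rowSet hb)).2 hb).1
  · intro b _ b' _ h
    exact congrArg Prod.fst h

end SkewShape
namespace SkewShape

variable (A : SkewShape)

lemma adj_symm {x y : ℕ × ℕ} (h : A.Adj x y) : A.Adj y x := by
  obtain ⟨h1, h2, h3⟩ := h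
  exact ⟨h2, h1, by tauto⟩

lemma blockId_mono {i i' : ℕ} (h : i ≤ i') : A.blockId i ≤ A.blockId i' := by
  apply Finset.card_le_card
  intro b hb
  rw [Finset.mem_filter] at hb ⊢
  exact ⟨hb.1, le_trans hb.2 h⟩

lemma blockId_le_nbrks (i : ℕ) : A.blockId i ≤ A.nbrks :=
  Finset.card_le_card (Finset.filter_subset _ _)

/-- Two cells in the same column have the same blockId. -/
lemma blockId_eq_of_same_col {x y : ℕ × ℕ} (hx : x ∈ A.cells) (hy : y ∈ A.cells)
    (hcol : x.2 = y.2) : A.blockId x.1 = A.blockId y.1 := by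
  -- wlog via helper
  suffices h : ∀ x y : ℕ × ℕ, x ∈ A.cells → y ∈ A.cells → x.2 = y.2 → x.1 ≤ y.1 →
      A.blockId x.1 = A.blockId y.1 by
    rcases Nat.le_total x.1 y.1 with hle | hle
    · exact h x y hx hy hcol hle
    · exact (h y x hy hx hcol.symm hle).symm
  intro x y hx hy hcol hle
  rw [blockId, blockId]
  congr 1
  apply Finset.ext
  intro b
  rw [Finset.mem_filter, Finset.mem_filter]
  constructor
  · rintro ⟨hb, hbi⟩
    exact ⟨hb, le_trans hbi hle⟩
  · rintro ⟨hb, hbi⟩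
    refine ⟨hb, ?_⟩
    by_contra hgt
    push_neg at hgt
    rw [mem_brks_iff] at hb
    have h1 := hb.2.2 x.1 (A.fst_mem_rowSet hx) hgt
    have h2 : A.outer.rowLen y.1 ≤ A.outer.rowLen b := A.rowLen_outer_anti hbi
    have h3 := A.inner_le_of_mem hx
    have h4 := A.lt_outer_of_mem hy
    omega

lemma blockId_eq_of_adj {x y : ℕ × ℕ} (h : A.Adj x y) :
    A.blockId x.1 = A.blockId y.1 := by
  obtain ⟨hx, hy, hrc | hrc⟩ := h
  · rw [hrc]
  · exact A.blockId_eq_of_same_col hx hy hrc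

lemma mem_cells_of_adj {x y : ℕ × ℕ} (h : A.Adj x y) : y ∈ A.cells := h.2.1

lemma blockId_eq_of_rtg {x y : ℕ × ℕ} (h : Relation.ReflTransGen A.Adj x y) :
    A.blockId x.1 = A.blockId y.1 := by
  induction h with
  | refl => rfl
  | tail _ hadj ih => exact ih.trans (A.blockId_eq_of_adj hadj)

lemma rtg_of_blockId_eq : ∀ n : ℕ, ∀ x y : ℕ × ℕ, x ∈ A.cells → y ∈ A.cells →
    x.1 ≤ y.1 → y.1 - x.1 = n → A.blockId x.1 = A.blockId y.1 →
    Relation.ReflTransGen A.Adj x y := by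
  intro n
  induction n using Nat.strong_induction_on with
  | _ n ih =>
    intro x y hx hy hle hn hbid
    rcases Nat.eq_or_lt_of_le hle with heq | hlt
    · exact Relation.ReflTransGen.single ⟨hx, hy, Or.inl heq⟩
    · -- find the minimal nonempty row strictly below x.1
      obtain ⟨b, hbmem, hbmin⟩ := (A.rowSet.filter (fun r => x.1 < r)).exists_min_image id
        ⟨y.1, Finset.mem_filter.2 ⟨A.fst_mem_rowSet hy, hlt⟩⟩
      rw [Finset.mem_filter] at hbmem
      obtain ⟨hbrow, hxb⟩ := hbmem
      have hby : b ≤ y.1 := by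
        have := hbmin y.1 (Finset.mem_filter.2 ⟨A.fst_mem_rowSet hy, hlt⟩)
        simpa using this
      -- b is not a break
      have hbnotbrk : b ∉ A.brks := by
        intro hbrk
        have hsub : insert b (A.brks.filter (· ≤ x.1)) ⊆ A.brks.filter (· ≤ y.1) := by
          intro c hc
          rw [Finset.mem_insert] at hc
          rcases hc with rfl | hc
          · exact Finset.mem_filter.2 ⟨hbrk, hby⟩
          · rw [Finset.mem_filter] at hc ⊢
            exact ⟨hc.1, le_trans hc.2 hle⟩
        have hcard := Finset.card_le_card hsub
        rw [Finset.card_insert_of_notMem (by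
          intro hmem
          have := (Finset.mem_filter.1 hmem).2
          omega)] at hcard
        rw [blockId, blockId] at hbid
        omega
      -- so b is linked to row x.1
      have hlink : ∃ a ∈ A.rowSet, a < b ∧ A.inner.rowLen a < A.outer.rowLen b := by
        rw [mem_brks_iff] at hbnotbrk
        push_neg at hbnotbrk
        obtain ⟨a, ha, hab, hno⟩ := hbnotbrk hbrow ⟨x.1, A.fst_mem_rowSet hx, hxb⟩
        exact ⟨a, ha, hab, by omega⟩
      obtain ⟨a, ha, hab, halink⟩ := hlink
      have hax : a ≤ x.1 := by
        by_contra hgt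
        push_neg at hgt
        have := hbmin a (Finset.mem_filter.2 ⟨ha, hgt⟩)
        simp only [id] at this
        omega
      have hmua : A.inner.rowLen x.1 ≤ A.inner.rowLen a := A.rowLen_inner_anti hax
      set j := A.inner.rowLen x.1 with hj
      have hz1 : (x.1, j) ∈ A.cells := by
        rw [mem_cells_iff]
        have := A.lt_outer_of_mem hx
        have := A.inner_le_of_mem hx
        omega
      have hz2 : (b, j) ∈ A.cells := by
        rw [mem_cells_iff]
        have hmub : A.inner.rowLen b ≤ A.inner.rowLen x.1 := A.rowLen_inner_anti (le_of_lt hxb)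
        omega
      have step1 : Relation.ReflTransGen A.Adj x (x.1, j) :=
        Relation.ReflTransGen.single ⟨hx, hz1, Or.inl rfl⟩
      have step2 : Relation.ReflTransGen A.Adj (x.1, j) (b, j) :=
        Relation.ReflTransGen.single ⟨hz1, hz2, Or.inr rfl⟩
      have hbidb : A.blockId b = A.blockId y.1 := by
        have h1 : A.blockId x.1 = A.blockId b := A.blockId_eq_of_same_col hz1 hz2 rfl
        omega
      have step3 : Relation.ReflTransGen A.Adj (b, j) y := by
        apply ih (y.1 - b) (by omega) _ _ hz2 hy hby rfl hbidb
      exact (step1.trans step2).trans step3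

/-- The component set function. -/
def comp (x : ℕ × ℕ) : Set (ℕ × ℕ) := {d | Relation.ReflTransGen A.Adj x d}

lemma comp_eq_iff {x y : ℕ × ℕ} (hx : x ∈ A.cells) (hy : y ∈ A.cells) :
    A.comp x = A.comp y ↔ A.blockId x.1 = A.blockId y.1 := by
  constructor
  · intro h
    have : y ∈ A.comp y := Relation.ReflTransGen.refl
    rw [← h] at this
    exact A.blockId_eq_of_rtg this
  · intro h
    have hsymm : Symmetric A.Adj := fun a b hab => A.adj_symm hab
    have hxy : Relation.ReflTransGen A.Adj x y := by
      rcases Nat.le_total x.1 y.1 with hle | hle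
      · exact A.rtg_of_blockId_eq (y.1 - x.1) x y hx hy hle rfl h
      · exact (@Relation.ReflTransGen.stdSymm _ _ ⟨hsymm⟩).symm _ _
          (A.rtg_of_blockId_eq (x.1 - y.1) y x hy hx hle rfl h.symm)
    have hyx : Relation.ReflTransGen A.Adj y x := (@Relation.ReflTransGen.stdSymm _ _ ⟨hsymm⟩).symm _ _ hxy
    apply Set.ext
    intro d
    exact ⟨fun hd => hyx.trans hd, fun hd => hxy.trans hd⟩

end SkewShape
namespace SkewShape

variable (A : SkewShape)

lemma exists_blockId_eq (hne : A.cells.Nonempty) {k : ℕ} (hk : k ≤ A.nbrks) :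
    ∃ i ∈ A.rowSet, A.blockId i = k := by
  induction k with
  | zero =>
    have hrne : A.rowSet.Nonempty := by
      obtain ⟨x, hx⟩ := hne
      exact ⟨x.1, A.fst_mem_rowSet hx⟩
    obtain ⟨i, hi, hmin⟩ := A.rowSet.exists_min_image id hrne
    refine ⟨i, hi, ?_⟩
    rw [blockId, Finset.card_eq_zero, Finset.filter_eq_empty_iff]
    intro b hb hbi
    rw [mem_brks_iff] at hb
    obtain ⟨hbrow, ⟨a, ha, hab⟩, -⟩ := hb
    have h1 := hmin a ha
    have h2 := hmin b hbrow
    simp only [id] at h1 h2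
    omega
  | succ k ih =>
    obtain ⟨i, hi, hik⟩ := ih (by omega)
    have hex : ∃ b ∈ A.brks, i < b := by
      by_contra hno
      push_neg at hno
      have hsub : A.brks ⊆ A.brks.filter (· ≤ i) := fun b hb =>
        Finset.mem_filter.2 ⟨hb, hno b hb⟩
      have := Finset.card_le_card hsub
      rw [blockId] at hik
      rw [nbrks] at hk
      omega
    obtain ⟨b, hb, hbmin⟩ := (A.brks.filter (fun r => i < r)).exists_min_image id
      (by obtain ⟨b, h1, h2⟩ := hex; exact ⟨b, Finset.mem_filter.2 ⟨h1, h2⟩⟩)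
    rw [Finset.mem_filter] at hb
    refine ⟨b, A.brks_subset_rowSet hb.1, ?_⟩
    have hset : A.brks.filter (· ≤ b) = insert b (A.brks.filter (· ≤ i)) := by
      apply Finset.ext
      intro c
      rw [Finset.mem_filter, Finset.mem_insert, Finset.mem_filter]
      constructor
      · rintro ⟨hc, hcb⟩
        rcases Nat.lt_or_ge i c with h | h
        · have := hbmin c (Finset.mem_filter.2 ⟨hc, h⟩)
          simp only [id] at this
          exact Or.inl (by omega)
        · exact Or.inr ⟨hc, h⟩
      · rintro (rfl | ⟨hc, hci⟩)
        · exact ⟨hb.1, le_refl _⟩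
        · exact ⟨hc, by omega⟩
    rw [blockId, hset, Finset.card_insert_of_notMem (by
      intro hmem
      have := (Finset.mem_filter.1 hmem).2
      omega)]
    rw [blockId] at hik
    omega

lemma blockId_image_eq (hne : A.cells.Nonempty) :
    A.cells.image (fun x => A.blockId x.1) = Finset.range (A.nbrks + 1) := by
  apply Finset.ext
  intro k
  rw [Finset.mem_image, Finset.mem_range]
  constructor
  · rintro ⟨x, -, rfl⟩
    have := A.blockId_le_nbrks x.1
    omega
  · intro hk
    obtain ⟨i, hi, hik⟩ := A.exists_blockId_eq hne (k := k) (by omega)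
    rw [mem_rowSet_iff] at hi
    exact ⟨(i, A.inner.rowLen i), A.mem_cells_iff.2 ⟨le_refl _, hi⟩, hik⟩

lemma numComponents_eq_nbrks (hne : A.cells.Nonempty) :
    A.numComponents = A.nbrks + 1 := by
  classical
  set I := A.cells.image (fun x => A.blockId x.1) with hI
  have pickspec : ∀ k ∈ I, ∃ a, a ∈ A.cells ∧ A.blockId a.1 = k := by
    intro k hk
    obtain ⟨a, ha, hak⟩ := Finset.mem_image.mp hk
    exact ⟨a, ha, hak⟩
  set pick : {k // k ∈ I} → ℕ × ℕ := fun k => (pickspec k.1 k.2).choose with hpick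
  have pickmem : ∀ k : {k // k ∈ I}, pick k ∈ A.cells := fun k =>
    (pickspec k.1 k.2).choose_spec.1
  have pickbid : ∀ k : {k // k ∈ I}, A.blockId (pick k).1 = k.1 := fun k =>
    (pickspec k.1 k.2).choose_spec.2
  set SF : Finset (Set (ℕ × ℕ)) := I.attach.image (fun k => A.comp (pick k)) with hSF
  have hcard : SF.card = I.card := by
    rw [hSF, Finset.card_image_of_injOn, Finset.card_attach]
    intro k1 _ k2 _ h
    have := (A.comp_eq_iff (pickmem k1) (pickmem k2)).1 h
    rw [pickbid k1, pickbid k2] at this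
    exact Subtype.ext this
  have hseteq : {S : Set (ℕ × ℕ) | ∃ c ∈ A.cells, S = {d | Relation.ReflTransGen A.Adj c d}}
      = ↑SF := by
    apply Set.ext
    intro S
    simp only [Set.mem_setOf_eq, Finset.coe_image, Set.mem_image, Finset.mem_coe,
      Finset.mem_attach, hSF]
    constructor
    · rintro ⟨c, hc, rfl⟩
      have hkI : A.blockId c.1 ∈ I := Finset.mem_image_of_mem _ hc
      refine ⟨⟨A.blockId c.1, hkI⟩, by simp, ?_⟩
      have : A.comp (pick ⟨A.blockId c.1, hkI⟩) = A.comp c := by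
        rw [A.comp_eq_iff (pickmem _) hc, pickbid]
      rw [this]
      rfl
    · rintro ⟨k, -, rfl⟩
      exact ⟨pick k, pickmem k, rfl⟩
  rw [numComponents, hseteq, Set.ncard_coe_finset, hcard, hI, A.blockId_image_eq hne,
    Finset.card_range]

lemma numComponents_empty (hne : A.cells = ∅) : A.numComponents = 0 := by
  rw [numComponents]
  convert Set.ncard_empty (Set (ℕ × ℕ))
  apply Set.eq_empty_iff_forall_notMem.2
  rintro S ⟨c, hc, -⟩
  rw [hne] at hc
  exact absurd hc (Finset.notMem_empty c)

end SkewShape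
lemma part_mem {lam : Multiset ℕ} {k : ℕ} (hk : k < Multiset.card lam) : part lam k ∈ lam := by
  rw [part]
  have hlen : (lam.sort (· ≥ ·)).length = Multiset.card lam := lam.length_sort _
  rw [List.getD_eq_getElem _ _ (by omega)]
  have : (lam.sort (· ≥ ·))[k] ∈ lam.sort (· ≥ ·) := List.getElem_mem _
  rw [← Multiset.mem_sort (· ≥ ·)]
  exact this

lemma part_pos {lam : Multiset ℕ} (h0 : 0 ∉ lam) {k : ℕ} (hk : k < Multiset.card lam) :
    1 ≤ part lam k := by
  have := part_mem hk
  rcases Nat.eq_zero_or_pos (part lam k) with h | h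
  · rw [h] at this; exact absurd this h0
  · exact h

namespace SkewShape

variable (A : SkewShape)

lemma readsBefore_refl (d : ℕ × ℕ) : ReadsBefore d d := Or.inr ⟨rfl, le_refl _⟩

lemma content_pos_iff {T : ℕ × ℕ → ℕ} {k : ℕ} :
    1 ≤ A.content T k ↔ ∃ d ∈ A.cells, T d = k := by
  rw [content, Nat.one_le_iff_ne_zero, ← Nat.pos_iff_ne_zero, Finset.card_pos]
  constructor
  · rintro ⟨d, hd⟩
    rw [Finset.mem_filter] at hd
    exact ⟨d, hd.1, hd.2⟩
  · rintro ⟨d, hd, hdk⟩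
    exact ⟨d, Finset.mem_filter.2 ⟨hd, hdk⟩⟩

/-- A cell holding value `v + 1` (`v ≥ 1`) has a cell with value `v` in a strictly
earlier row. -/
lemma exists_pred {T : ℕ × ℕ → ℕ} (hLR : A.IsLR T) {d : ℕ × ℕ} {v : ℕ}
    (hd : d ∈ A.cells) (hv : T d = v + 1) (hv1 : 1 ≤ v) :
    ∃ d' ∈ A.cells, T d' = v ∧ d'.1 < d.1 := by
  obtain ⟨hssyt, hlat⟩ := hLR
  have hineq := hlat d hd (v - 1)
  have hv' : v - 1 + 2 = v + 1 := by omega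
  have hv'' : v - 1 + 1 = v := by omega
  rw [hv', hv''] at hineq
  have hpos : 1 ≤ (A.cells.filter fun c => T c = v + 1 ∧ ReadsBefore c d).card := by
    rw [Nat.one_le_iff_ne_zero, ← Nat.pos_iff_ne_zero, Finset.card_pos]
    exact ⟨d, Finset.mem_filter.2 ⟨hd, hv, readsBefore_refl d⟩⟩
  have : 1 ≤ (A.cells.filter fun c => T c = v ∧ ReadsBefore c d).card := le_trans hpos hineq
  rw [Nat.one_le_iff_ne_zero, ← Nat.pos_iff_ne_zero, Finset.card_pos] at this
  obtain ⟨c, hc⟩ := this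
  rw [Finset.mem_filter] at hc
  obtain ⟨hcc, hcv, hcrb⟩ := hc
  rcases hcrb with hlt | ⟨heq, hle⟩
  · exact ⟨c, hcc, hcv, hlt⟩
  · exfalso
    have hrow := hssyt.2.1 d.1 d.2 c.2 (by rwa [Prod.mk.eta]) (by rw [← heq, Prod.mk.eta]; exact hcc) hle
    rw [Prod.mk.eta, ← heq, Prod.mk.eta] at hrow
    omega

lemma val_le_rank {T : ℕ × ℕ → ℕ} (hLR : A.IsLR T) :
    ∀ v : ℕ, ∀ d ∈ A.cells, T d = v → v ≤ A.rank d.1 + 1 := by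
  intro v
  induction v using Nat.strong_induction_on with
  | _ v ih =>
    intro d hd hdv
    rcases Nat.lt_or_ge v 2 with h | h
    · omega
    · obtain ⟨d', hd', hd'v, hlt⟩ := A.exists_pred hLR hd (by omega : T d = (v - 1) + 1) (by omega)
      have h1 := ih (v - 1) (by omega) d' hd' hd'v
      have h2 := A.rank_lt_rank (A.fst_mem_rowSet hd') hlt
      omega

section Bounds

variable {T : ℕ × ℕ → ℕ} {lam : Multiset ℕ}

/-- U1: the number of 1s is at most the number of columns. -/
lemma content_one_le (hLR : A.IsLR T) : A.content T 1 ≤ A.numCols := by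
  rw [content, numCols]
  apply Finset.card_le_card_of_injOn Prod.snd
  · intro x hx
    exact A.snd_mem_colSet (Finset.mem_filter.1 hx).1
  · intro x hx y hy hxy
    simp only [Finset.mem_coe, Finset.mem_filter] at hx hy
    rcases Nat.lt_trichotomy x.1 y.1 with h | h | h
    · have := hLR.1.2.2 x.1 y.1 x.2 (by rw [Prod.mk.eta]; exact hx.1) (by rw [hxy, Prod.mk.eta]; exact hy.1) h
      rw [Prod.mk.eta, hxy, Prod.mk.eta] at this
      omega
    · exact Prod.ext h hxy
    · have := hLR.1.2.2 y.1 x.1 y.2 (by rw [Prod.mk.eta]; exact hy.1) (by rw [← hxy, Prod.mk.eta]; exact hx.1) h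
      rw [Prod.mk.eta, ← hxy, Prod.mk.eta] at this
      omega

/-- U2: the number of parts is at most the number of rows. -/
lemma card_le_numRows (hLR : A.IsLR T) (h0 : 0 ∉ lam)
    (hcont : ∀ i : ℕ, A.content T (i + 1) = part lam i) :
    Multiset.card lam ≤ A.numRows := by
  rcases Nat.eq_zero_or_pos (Multiset.card lam) with h | h
  · omega
  · have hp : 1 ≤ A.content T (Multiset.card lam) := by
      have := hcont (Multiset.card lam - 1)
      have h2 : Multiset.card lam - 1 + 1 = Multiset.card lam := by omega
      rw [h2] at this
      rw [this]
      exact part_pos h0 (by omega)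
    rw [content_pos_iff] at hp
    obtain ⟨d, hd, hdv⟩ := hp
    have := A.val_le_rank hLR _ d hd hdv
    have := A.rank_lt_numRows (A.fst_mem_rowSet hd)
    omega

/-- Chain lemma: if the filling uses `numRows` values, each rank carries its value. -/
lemma chain_lemma (hLR : A.IsLR T) (h0 : 0 ∉ lam)
    (hcont : ∀ i : ℕ, A.content T (i + 1) = part lam i)
    (hcard : Multiset.card lam = A.numRows) :
    ∀ t, t < A.numRows → ∃ d ∈ A.cells, T d = A.numRows - t ∧
      A.rank d.1 = A.numRows - t - 1 := by
  intro t
  induction t with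
  | zero =>
    intro ht
    have hp : 1 ≤ A.content T A.numRows := by
      have := hcont (A.numRows - 1)
      have h2 : A.numRows - 1 + 1 = A.numRows := by omega
      rw [h2] at this
      rw [this]
      exact part_pos h0 (by omega)
    rw [content_pos_iff] at hp
    obtain ⟨d, hd, hdv⟩ := hp
    have h1 := A.val_le_rank hLR _ d hd hdv
    have h2 := A.rank_lt_numRows (A.fst_mem_rowSet hd)
    exact ⟨d, hd, by omega, by omega⟩
  | succ t ih =>
    intro ht
    obtain ⟨d, hd, hdv, hdr⟩ := ih (by omega)
    obtain ⟨d', hd', hd'v, hlt⟩ := A.exists_pred hLR hd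
      (by omega : T d = (A.numRows - t - 1) + 1) (by omega)
    have h1 := A.val_le_rank hLR _ d' hd' hd'v
    have h2 := A.rank_lt_rank (A.fst_mem_rowSet hd') hlt
    exact ⟨d', hd', by omega, by omega⟩

/-- U3: if the filling has `numRows` parts then the largest part is at most
`numCols - nbrks`. -/
lemma part_zero_add_nbrks_le (hLR : A.IsLR T) (h0 : 0 ∉ lam)
    (hcont : ∀ i : ℕ, A.content T (i + 1) = part lam i)
    (hcard : Multiset.card lam = A.numRows) :
    part lam 0 + A.nbrks ≤ A.numCols := by
  classical
  -- for each break row b, choose a column jb b whose top cell has value rank b + 1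
  set jb : ℕ → ℕ := fun b => sInf {j | (b, j) ∈ A.cells ∧ T (b, j) = A.rank b + 1} with hjb
  have hjbspec : ∀ b ∈ A.brks, (b, jb b) ∈ A.cells ∧ T (b, jb b) = A.rank b + 1 := by
    intro b hb
    have hbrow := A.brks_subset_rowSet hb
    have hrk := A.rank_lt_numRows hbrow
    obtain ⟨d, hd, hdv, hdr⟩ := A.chain_lemma hLR h0 hcont hcard
      (A.numRows - (A.rank b + 1)) (by omega)
    have hv : T d = A.rank b + 1 := by omega
    have hr : A.rank d.1 = A.rank b := by omega
    have hdb : d.1 = b := A.rank_injOn (A.fst_mem_rowSet hd) hbrow hr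
    have hmem : d.2 ∈ {j | (b, j) ∈ A.cells ∧ T (b, j) = A.rank b + 1} := by
      rw [Set.mem_setOf_eq, ← hdb, Prod.mk.eta]
      exact ⟨hd, by rw [hr]; exact hv⟩
    exact Nat.sInf_mem ⟨d.2, hmem⟩
  -- no cell in column jb b has value 1
  have hno1 : ∀ b ∈ A.brks, ∀ x ∈ A.cells, x.2 = jb b → T x ≠ 1 := by
    intro b hb x hx hxcol
    obtain ⟨hcell, hval⟩ := hjbspec b hb
    have hbrk := (A.mem_brks_iff).1 hb
    rcases Nat.lt_trichotomy x.1 b with h | h | h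
    · -- impossible: no cells above the break in this column
      exfalso
      have hall : A.outer.rowLen b ≤ A.inner.rowLen x.1 := hbrk.2.2 x.1 (A.fst_mem_rowSet hx) h
      have h1 : A.inner.rowLen x.1 ≤ x.2 := A.inner_le_of_mem hx
      have h2 : jb b < A.outer.rowLen b := A.lt_outer_of_mem hcell
      omega
    · -- x is the chosen cell
      have : x = (b, jb b) := Prod.ext h hxcol
      rw [this, hval]
      have hpos : 0 < A.rank b := by
        obtain ⟨a, ha, hab⟩ := hbrk.2.1
        rw [rank, Finset.card_pos]
        exact ⟨a, Finset.mem_filter.2 ⟨ha, hab⟩⟩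
      omega
    · -- strictly below: column strictness
      have hxc : x = (x.1, jb b) := Prod.ext rfl hxcol
      have := hLR.1.2.2 b x.1 (jb b) hcell (by rw [← hxc]; exact hx) h
      rw [← hxc, hval] at this
      omega
  -- jb is injective on brks
  have hinj : ∀ b ∈ A.brks, ∀ b' ∈ A.brks, jb b = jb b' → b = b' := by
    intro b hb b' hb' heq
    by_contra hne
    wlog hlt : b < b' generalizing b b'
    · exact this b' hb' b hb heq.symm (Ne.symm hne) (by omega)
    have h1 := ((A.mem_brks_iff).1 hb').2.2 b (A.brks_subset_rowSet hb) hlt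
    have h2 : A.inner.rowLen b ≤ jb b := A.inner_le_of_mem (hjbspec b hb).1
    have h3 : jb b' < A.outer.rowLen b' := A.lt_outer_of_mem (hjbspec b' hb').1
    omega
  -- count
  have hpart : part lam 0 = A.content T 1 := (hcont 0).symm
  rw [hpart]
  have hsub : A.brks.image jb ⊆ A.colSet := by
    intro j hj
    rw [Finset.mem_image] at hj
    obtain ⟨b, hb, rfl⟩ := hj
    exact A.snd_mem_colSet (hjbspec b hb).1
  have hcardim : (A.brks.image jb).card = A.nbrks := by
    rw [nbrks]
    exact Finset.card_image_of_injOn hinj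
  have hmain : A.content T 1 ≤ A.numCols - A.nbrks := by
    rw [content]
    have : (A.cells.filter fun c => T c = 1).card ≤ (A.colSet \ A.brks.image jb).card := by
      apply Finset.card_le_card_of_injOn Prod.snd
      · intro x hx
        rw [Finset.mem_coe, Finset.mem_filter] at hx
        rw [Finset.mem_coe, Finset.mem_sdiff]
        refine ⟨A.snd_mem_colSet hx.1, ?_⟩
        intro hmem
        rw [Finset.mem_image] at hmem
        obtain ⟨b, hb, hbe⟩ := hmem
        exact hno1 b hb x hx.1 hbe.symm hx.2
      · intro x hx y hy hxy
        simp only [Finset.mem_coe, Finset.mem_filter] at hx hy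
        rcases Nat.lt_trichotomy x.1 y.1 with h | h | h
        · have := hLR.1.2.2 x.1 y.1 x.2 (by rw [Prod.mk.eta]; exact hx.1) (by rw [hxy, Prod.mk.eta]; exact hy.1) h
          rw [Prod.mk.eta, hxy, Prod.mk.eta] at this
          omega
        · exact Prod.ext h hxy
        · have := hLR.1.2.2 y.1 x.1 y.2 (by rw [Prod.mk.eta]; exact hy.1) (by rw [← hxy, Prod.mk.eta]; exact hx.1) h
          rw [Prod.mk.eta, ← hxy, Prod.mk.eta] at this
          omega
    rw [Finset.card_sdiff_of_subset hsub, hcardim] at this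
    rw [numCols]
    omega
  have := A.nbrks_le_numCols
  omega

end Bounds

end SkewShape
namespace SkewShape

variable (A : SkewShape)

/-- Number of cells above a given cell in its column. -/
def cpos (x : ℕ × ℕ) : ℕ := (A.cells.filter (fun y => y.2 = x.2 ∧ y.1 < x.1)).card

/-- The canonical filling: column position plus one, bumped to `rank + 1` at the last
cell of each row when `bump` is true. -/
def fill (bump : Bool) (x : ℕ × ℕ) : ℕ :=
  max (A.cpos x + 1)
    (if bump = true ∧ x.2 + 1 = A.outer.rowLen x.1 then A.rank x.1 + 1 else 0)

lemma cpos_lt_cpos {x y : ℕ × ℕ} (hx : x ∈ A.cells) (hcol : x.2 = y.2)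
    (hrow : x.1 < y.1) : A.cpos x < A.cpos y := by
  apply Finset.card_lt_card
  constructor
  · intro z hz
    rw [Finset.mem_filter] at hz ⊢
    exact ⟨hz.1, hz.2.1.trans hcol, by omega⟩
  · intro hsub
    have hxmem : x ∈ A.cells.filter (fun y' => y'.2 = y.2 ∧ y'.1 < y.1) :=
      Finset.mem_filter.2 ⟨hx, hcol, hrow⟩
    have := Finset.mem_filter.1 (hsub hxmem)
    omega

lemma cpos_le_rank {x : ℕ × ℕ} (hx : x ∈ A.cells) : A.cpos x ≤ A.rank x.1 := by
  rw [cpos, rank]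
  apply Finset.card_le_card_of_injOn Prod.fst
  · intro y hy
    simp only [Finset.mem_coe, Finset.mem_filter] at hy
    exact Finset.mem_filter.2 ⟨A.fst_mem_rowSet hy.1, hy.2.2⟩
  · intro y hy z hz hyz
    simp only [Finset.mem_coe, Finset.mem_filter] at hy hz
    exact Prod.ext hyz (hy.2.1.trans hz.2.1.symm)

lemma cpos_row_mono {i j j' : ℕ} (hx : (i, j) ∈ A.cells) (hy : (i, j') ∈ A.cells)
    (hjj : j ≤ j') : A.cpos (i, j) ≤ A.cpos (i, j') := by
  rw [cpos, cpos]
  apply Finset.card_le_card_of_injOn (fun z => (z.1, j'))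
  · intro z hz
    simp only [Finset.mem_coe, Finset.mem_filter] at hz
    obtain ⟨hzc, hz2, hz1⟩ := hz
    refine Finset.mem_filter.2 ⟨?_, rfl, hz1⟩
    rw [mem_cells_iff]
    have h1 : A.inner.rowLen z.1 ≤ z.2 := A.inner_le_of_mem hzc
    have h2 : j' < A.outer.rowLen i := A.lt_outer_of_mem hy
    have h3 : A.outer.rowLen i ≤ A.outer.rowLen z.1 := A.rowLen_outer_anti (le_of_lt hz1)
    have hz2' : z.2 = j := hz2
    omega
  · intro y hy z hz hyz
    simp only [Finset.mem_coe, Finset.mem_filter] at hy hz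
    have hyz' : (y.1, j') = (z.1, j') := hyz
    rw [Prod.mk.injEq] at hyz'
    have h1 : y.1 = z.1 := hyz'.1
    have h2 : y.2 = j := hy.2.1
    have h3 : z.2 = j := hz.2.1
    exact Prod.ext h1 (h2.trans h3.symm)

lemma fill_le {b : Bool} {x : ℕ × ℕ} (hx : x ∈ A.cells) :
    A.fill b x ≤ A.rank x.1 + 1 := by
  rw [fill]
  apply max_le
  · have := A.cpos_le_rank hx
    omega
  · split <;> omega

lemma fill_pos (b : Bool) (x : ℕ × ℕ) : 1 ≤ A.fill b x := by
  rw [fill]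
  exact le_trans (by omega : 1 ≤ A.cpos x + 1) (le_max_left _ _)

lemma fill_last {x : ℕ × ℕ} (hx : x ∈ A.cells) (hlast : x.2 + 1 = A.outer.rowLen x.1) :
    A.fill true x = A.rank x.1 + 1 := by
  rw [fill, if_pos ⟨rfl, hlast⟩]
  have := A.cpos_le_rank hx
  omega

lemma fill_false (x : ℕ × ℕ) : A.fill false x = A.cpos x + 1 := by
  rw [fill, if_neg (by simp)]
  omega

/-- Row weak monotonicity of the filling. -/
lemma fill_row_mono (b : Bool) {i j j' : ℕ} (hx : (i, j) ∈ A.cells) (hy : (i, j') ∈ A.cells)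
    (hjj : j ≤ j') : A.fill b (i, j) ≤ A.fill b (i, j') := by
  rcases Nat.eq_or_lt_of_le hjj with rfl | hlt
  · exact le_refl _
  · have hcm := A.cpos_row_mono hx hy hjj
    rw [fill, fill]
    have hnb : ¬(b = true ∧ (i, j).2 + 1 = A.outer.rowLen (i, j).1) := by
      rintro ⟨-, hb⟩
      have := A.lt_outer_of_mem hy
      simp only at hb this
      omega
    rw [if_neg hnb]
    have h1 : A.cpos (i, j) + 1 ≤ A.cpos (i, j') + 1 := by omega
    calc max (A.cpos (i, j) + 1) 0 = A.cpos (i, j) + 1 := by omega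
      _ ≤ A.cpos (i, j') + 1 := h1
      _ ≤ _ := le_max_left _ _

/-- Column strict monotonicity of the filling. -/
lemma fill_col_strict (b : Bool) {x y : ℕ × ℕ} (hx : x ∈ A.cells) (hy : y ∈ A.cells)
    (hcol : x.2 = y.2) (hrow : x.1 < y.1) : A.fill b x < A.fill b y := by
  have hcp := A.cpos_lt_cpos hx hcol hrow
  have hylow : A.cpos y + 1 ≤ A.fill b y := le_max_left _ _
  rw [fill]
  apply Nat.max_lt.mpr
  constructor
  · omega
  · split
    · rename_i hcond
      obtain ⟨hb, hlastx⟩ := hcond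
      -- y is also a last cell
      have h1 : A.outer.rowLen y.1 ≤ A.outer.rowLen x.1 := A.rowLen_outer_anti (le_of_lt hrow)
      have h2 : y.2 < A.outer.rowLen y.1 := A.lt_outer_of_mem hy
      have hlasty : y.2 + 1 = A.outer.rowLen y.1 := by omega
      have hfy : A.rank y.1 + 1 ≤ A.fill b y := by
        rw [fill, if_pos ⟨hb, hlasty⟩]
        exact le_trans (by omega) (le_max_right _ _)
      have hr := A.rank_lt_rank (A.fst_mem_rowSet hx) hrow
      omega
    · have := A.fill_pos b y
      omega

lemma fill_isSsyt (b : Bool) : A.IsSsyt (A.fill b) := by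
  refine ⟨fun c _ => A.fill_pos b c, ?_, ?_⟩
  · intro i j j' hx hy hjj
    exact A.fill_row_mono b hx hy hjj
  · intro i i' j hx hy hii
    exact A.fill_col_strict b hx hy rfl hii

end SkewShape
namespace SkewShape

variable (A : SkewShape)

/-- The row of the nearest cell above `x` in its column. -/
noncomputable def arow (x : ℕ × ℕ) : ℕ := sSup {i | (i, x.2) ∈ A.cells ∧ i < x.1}

/-- The nearest nonempty row above row `i`. -/
noncomputable def prow (i : ℕ) : ℕ := sSup {a | a ∈ A.rowSet ∧ a < i}

lemma arow_spec {x : ℕ × ℕ} (hx : x ∈ A.cells) (h : 1 ≤ A.cpos x) :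
    ((A.arow x, x.2) ∈ A.cells ∧ A.arow x < x.1) ∧
      ∀ i, (i, x.2) ∈ A.cells → i < x.1 → i ≤ A.arow x := by
  have hbdd : BddAbove {i | (i, x.2) ∈ A.cells ∧ i < x.1} :=
    ⟨x.1, fun i hi => le_of_lt hi.2⟩
  have hne : {i | (i, x.2) ∈ A.cells ∧ i < x.1}.Nonempty := by
    have h' : 0 < (A.cells.filter (fun y => y.2 = x.2 ∧ y.1 < x.1)).card := h
    obtain ⟨y, hy⟩ := Finset.card_pos.mp h'
    rw [Finset.mem_filter] at hy
    refine ⟨y.1, ?_, hy.2.2⟩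
    have : (y.1, x.2) = y := Prod.ext rfl hy.2.1.symm
    rw [this]
    exact hy.1
  exact ⟨Nat.sSup_mem hne hbdd, fun i hi hilt => le_csSup hbdd ⟨hi, hilt⟩⟩

lemma cpos_arow {x : ℕ × ℕ} (hx : x ∈ A.cells) (h : 1 ≤ A.cpos x) :
    A.cpos (A.arow x, x.2) + 1 = A.cpos x := by
  obtain ⟨⟨hmem, hlt⟩, hmax⟩ := A.arow_spec hx h
  have hseteq : A.cells.filter (fun y => y.2 = (A.arow x, x.2).2 ∧ y.1 < (A.arow x, x.2).1)
      = (A.cells.filter (fun y => y.2 = x.2 ∧ y.1 < x.1)).erase (A.arow x, x.2) := by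
    apply Finset.ext
    intro z
    rw [Finset.mem_filter, Finset.mem_erase, Finset.mem_filter]
    simp only
    constructor
    · rintro ⟨hz, hz2, hz1⟩
      refine ⟨?_, hz, hz2, by omega⟩
      intro hzeq
      rw [hzeq] at hz1
      simp only at hz1
      omega
    · rintro ⟨hzne, hz, hz2, hz1⟩
      refine ⟨hz, hz2, ?_⟩
      have hle : z.1 ≤ A.arow x := by
        apply hmax z.1 _ hz1
        have : (z.1, x.2) = z := Prod.ext rfl hz2.symm
        rw [this]
        exact hz
      rcases Nat.eq_or_lt_of_le hle with heq | hlt'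
      · exfalso
        exact hzne (Prod.ext heq hz2)
      · exact hlt'
  rw [cpos, hseteq, Finset.card_erase_of_mem (Finset.mem_filter.2 ⟨hmem, rfl, hlt⟩)]
  rw [cpos] at h ⊢
  omega

lemma prow_spec {i : ℕ} (h : 1 ≤ A.rank i) :
    (A.prow i ∈ A.rowSet ∧ A.prow i < i) ∧ ∀ a ∈ A.rowSet, a < i → a ≤ A.prow i := by
  have hbdd : BddAbove {a | a ∈ A.rowSet ∧ a < i} := ⟨i, fun a ha => le_of_lt ha.2⟩
  have hne : {a | a ∈ A.rowSet ∧ a < i}.Nonempty := by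
    have h' : 0 < (A.rowSet.filter (· < i)).card := h
    obtain ⟨a, ha⟩ := Finset.card_pos.mp h'
    rw [Finset.mem_filter] at ha
    exact ⟨a, ha.1, ha.2⟩
  exact ⟨Nat.sSup_mem hne hbdd, fun a ha halt => le_csSup hbdd ⟨ha, halt⟩⟩

lemma rank_prow {i : ℕ} (h : 1 ≤ A.rank i) : A.rank (A.prow i) + 1 = A.rank i := by
  obtain ⟨⟨hmem, hlt⟩, hmax⟩ := A.prow_spec h
  have hseteq : A.rowSet.filter (· < i) = insert (A.prow i) (A.rowSet.filter (· < A.prow i)) := by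
    apply Finset.ext
    intro a
    rw [Finset.mem_filter, Finset.mem_insert, Finset.mem_filter]
    constructor
    · rintro ⟨ha, hai⟩
      have := hmax a ha hai
      rcases Nat.eq_or_lt_of_le this with heq | hlt'
      · exact Or.inl heq
      · exact Or.inr ⟨ha, hlt'⟩
    · rintro (rfl | ⟨ha, hap⟩)
      · exact ⟨hmem, hlt⟩
      · exact ⟨ha, by omega⟩
  rw [rank, rank, hseteq, Finset.card_insert_of_notMem (by
    intro hmem'
    have := (Finset.mem_filter.1 hmem').2
    omega)]

/-- The matching map sending a cell of value `v+1` to a cell of value `v`. -/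
noncomputable def nx (v : ℕ) (x : ℕ × ℕ) : ℕ × ℕ :=
  if A.cpos x = v then (A.arow x, x.2)
  else (A.prow x.1, A.outer.rowLen (A.prow x.1) - 1)

/-- Decomposition of the possible value cases. -/
lemma fill_cases {b : Bool} {x : ℕ × ℕ} {v : ℕ} (hx : x ∈ A.cells)
    (hfx : A.fill b x = v + 1) (hv : 1 ≤ v) :
    A.cpos x = v ∨ (A.cpos x ≠ v ∧ b = true ∧ x.2 + 1 = A.outer.rowLen x.1 ∧
      A.rank x.1 = v) := by
  by_cases hc : A.cpos x = v
  · exact Or.inl hc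
  · refine Or.inr ⟨hc, ?_⟩
    rw [fill] at hfx
    rcases max_choice (A.cpos x + 1)
      (if b = true ∧ x.2 + 1 = A.outer.rowLen x.1 then A.rank x.1 + 1 else 0) with hm | hm
    · rw [hm] at hfx; omega
    · rw [hm] at hfx
      by_cases hcond : b = true ∧ x.2 + 1 = A.outer.rowLen x.1
      · rw [if_pos hcond] at hfx
        exact ⟨hcond.1, hcond.2, by omega⟩
      · rw [if_neg hcond] at hfx
        omega

lemma bumpterm_le_fill {b : Bool} (x : ℕ × ℕ) :
    (if b = true ∧ x.2 + 1 = A.outer.rowLen x.1 then A.rank x.1 + 1 else 0) ≤ A.fill b x :=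
  le_max_right _ _

lemma nx_spec {b : Bool} {v : ℕ} (hv : 1 ≤ v) {x : ℕ × ℕ} (hx : x ∈ A.cells)
    (hfx : A.fill b x = v + 1) :
    A.nx v x ∈ A.cells ∧ A.fill b (A.nx v x) = v ∧ (A.nx v x).1 < x.1 := by
  rcases A.fill_cases hx hfx hv with hc | ⟨hc, hb, hlast, hrk⟩
  · -- above-cell case
    rw [nx, if_pos hc]
    have h1 : 1 ≤ A.cpos x := by omega
    obtain ⟨⟨hmem, hlt⟩, hmax⟩ := A.arow_spec hx h1
    refine ⟨hmem, ?_, hlt⟩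
    have hcp : A.cpos (A.arow x, x.2) + 1 = A.cpos x := A.cpos_arow hx h1
    rw [fill]
    have hbt : (if b = true ∧ (A.arow x, x.2).2 + 1 = A.outer.rowLen (A.arow x, x.2).1
        then A.rank (A.arow x, x.2).1 + 1 else 0) ≤ v := by
      split
      · rename_i hcond
        obtain ⟨hb', hlast'⟩ := hcond
        simp only at hlast'
        -- then x is also a last cell
        have h2 : A.outer.rowLen x.1 ≤ A.outer.rowLen (A.arow x) :=
          A.rowLen_outer_anti (le_of_lt hlt)
        have h3 : x.2 < A.outer.rowLen x.1 := A.lt_outer_of_mem hx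
        have hlastx : x.2 + 1 = A.outer.rowLen x.1 := by omega
        have hbtx := A.bumpterm_le_fill (b := b) x
        rw [if_pos ⟨hb', hlastx⟩, hfx] at hbtx
        have hr := A.rank_lt_rank (A.fst_mem_rowSet hmem) hlt
        simp only at hr ⊢
        omega
      · omega
    omega
  · -- previous-row case
    rw [nx, if_neg hc]
    have hrk1 : 1 ≤ A.rank x.1 := by omega
    obtain ⟨⟨hmem, hlt⟩, hmax⟩ := A.prow_spec hrk1
    have hrow := (A.mem_rowSet_iff).1 hmem
    have hycell : (A.prow x.1, A.outer.rowLen (A.prow x.1) - 1) ∈ A.cells :=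
      A.mem_cells_iff.2 (by omega)
    refine ⟨hycell, ?_, hlt⟩
    have hfy := A.fill_last hycell (by simp only; omega)
    rw [hb] at *
    rw [hfy]
    have := A.rank_prow hrk1
    simp only
    omega

lemma nx_injOn {b : Bool} {v : ℕ} (hv : 1 ≤ v) {x y : ℕ × ℕ} (hx : x ∈ A.cells)
    (hfx : A.fill b x = v + 1) (hy : y ∈ A.cells) (hfy : A.fill b y = v + 1)
    (heq : A.nx v x = A.nx v y) : x = y := by
  -- mixed case helper
  have mixed : ∀ z w : ℕ × ℕ, z ∈ A.cells → A.fill b z = v + 1 → w ∈ A.cells →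
      A.fill b w = v + 1 → A.cpos z = v → ¬ A.cpos w = v → A.nx v z = A.nx v w → False := by
    intro z w hz hfz hw hfw hcz hcw heq'
    obtain (h | ⟨-, hb, hwlast, hwrk⟩) := A.fill_cases hw hfw hv
    · exact hcw h
    rw [nx, if_pos hcz, nx, if_neg hcw, Prod.mk.injEq] at heq'
    obtain ⟨he1, he2⟩ := heq'
    have hz1 : 1 ≤ A.cpos z := by omega
    obtain ⟨⟨hamem, halt⟩, hamax⟩ := A.arow_spec hz hz1
    have hwrk1 : 1 ≤ A.rank w.1 := by omega
    obtain ⟨⟨hpmem, hplt⟩, hpmax⟩ := A.prow_spec hwrk1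
    set p := A.prow w.1 with hp
    -- facts
    have hwout : w.2 < A.outer.rowLen w.1 := A.lt_outer_of_mem hw
    have hlamp : A.outer.rowLen w.1 ≤ A.outer.rowLen p := A.rowLen_outer_anti (le_of_lt hplt)
    rcases Nat.lt_trichotomy z.1 w.1 with h1 | h1 | h1
    · -- z.1 < w.1 : contradicts maximality of p
      have := hpmax z.1 (A.fst_mem_rowSet hz) h1
      omega
    · -- same row: z = w, contradiction with cpos
      have hzout : z.2 < A.outer.rowLen z.1 := A.lt_outer_of_mem hz
      have hzw : z.2 = w.2 := by
        rw [h1] at hzout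
        omega
      exact hcw (by rw [← Prod.ext h1 hzw]; exact hcz)
    · -- w.1 < z.1 : the cell (w.1, z.2) is above z in its column, beyond arow
      have hcell : (w.1, z.2) ∈ A.cells := by
        rw [mem_cells_iff]
        have hmu : A.inner.rowLen w.1 ≤ w.2 := A.inner_le_of_mem hw
        have hout2 : z.2 < A.outer.rowLen z.1 := A.lt_outer_of_mem hz
        have hl : A.outer.rowLen z.1 ≤ A.outer.rowLen w.1 := A.rowLen_outer_anti (le_of_lt h1)
        omega
      have := hamax w.1 hcell h1
      omega
  by_cases hcx : A.cpos x = v <;> by_cases hcy : A.cpos y = v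
  · -- both above-cell case
    rw [nx, if_pos hcx, nx, if_pos hcy, Prod.mk.injEq] at heq
    obtain ⟨he1, he2⟩ := heq
    rcases Nat.lt_trichotomy x.1 y.1 with h1 | h1 | h1
    · have := A.cpos_lt_cpos hx he2 h1
      omega
    · exact Prod.ext h1 he2
    · have := A.cpos_lt_cpos hy he2.symm h1
      omega
  · exact absurd (mixed x y hx hfx hy hfy hcx hcy heq) (fun h => h)
  · exact absurd (mixed y x hy hfy hx hfx hcy hcx heq.symm) (fun h => h)
  · -- both previous-row case
    obtain (h | ⟨-, hb, hxlast, hxrk⟩) := A.fill_cases hx hfx hv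
    · exact absurd h hcx
    obtain (h | ⟨-, -, hylast, hyrk⟩) := A.fill_cases hy hfy hv
    · exact absurd h hcy
    rw [nx, if_neg hcx, nx, if_neg hcy, Prod.mk.injEq] at heq
    obtain ⟨he1, -⟩ := heq
    have hxrk1 : 1 ≤ A.rank x.1 := by omega
    have hyrk1 : 1 ≤ A.rank y.1 := by omega
    obtain ⟨⟨hpx, hpxlt⟩, hpxmax⟩ := A.prow_spec hxrk1
    obtain ⟨⟨hpy, hpylt⟩, hpymax⟩ := A.prow_spec hyrk1
    have h11 : x.1 = y.1 := by
      rcases Nat.lt_trichotomy x.1 y.1 with h1 | h1 | h1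
      · have := hpymax x.1 (A.fst_mem_rowSet hx) h1
        omega
      · exact h1
      · have := hpxmax y.1 (A.fst_mem_rowSet hy) h1
        omega
    have h22 : x.2 = y.2 := by
      rw [h11] at hxlast
      omega
    exact Prod.ext h11 h22

end SkewShape
namespace SkewShape

variable (A : SkewShape)

/-- Generalized counting inequality via the matching map. -/
lemma fill_count_le {b : Bool} {v : ℕ} (hv : 1 ≤ v) (P : ℕ × ℕ → Prop) [DecidablePred P]
    (hP : ∀ x y : ℕ × ℕ, y.1 < x.1 → P x → P y) :
    (A.cells.filter fun c => A.fill b c = v + 1 ∧ P c).card ≤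
      (A.cells.filter fun c => A.fill b c = v ∧ P c).card := by
  apply Finset.card_le_card_of_injOn (A.nx v)
  · intro x hx
    simp only [Finset.mem_coe, Finset.mem_filter] at hx
    obtain ⟨hxc, hfx, hPx⟩ := hx
    obtain ⟨h1, h2, h3⟩ := A.nx_spec hv hxc hfx
    exact Finset.mem_filter.2 ⟨h1, h2, hP x (A.nx v x) h3 hPx⟩
  · intro x hx y hy heq
    simp only [Finset.mem_coe, Finset.mem_filter] at hx hy
    exact A.nx_injOn hv hx.1 hx.2.1 hy.1 hy.2.1 heq

lemma fill_isLR (b : Bool) : A.IsLR (A.fill b) := by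
  refine ⟨A.fill_isSsyt b, ?_⟩
  intro d _ k
  have := A.fill_count_le (b := b) (v := k + 1) (by omega) (fun c => ReadsBefore c d)
    (by
      intro x y hyx hx
      rcases hx with h | ⟨h, -⟩
      · exact Or.inl (by omega)
      · exact Or.inl (by omega))
  exact this

lemma content_fill_succ_le {b : Bool} {v : ℕ} (hv : 1 ≤ v) :
    A.content (A.fill b) (v + 1) ≤ A.content (A.fill b) v := by
  have := A.fill_count_le (b := b) hv (fun _ => True) (by intro x y _ _; trivial)
  rw [content, content]
  convert this using 2 <;> simp

lemma content_fill_anti {b : Bool} {v w : ℕ} (hv : 1 ≤ v) (hvw : v ≤ w) :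
    A.content (A.fill b) w ≤ A.content (A.fill b) v := by
  induction w, hvw using Nat.le_induction with
  | base => exact le_refl _
  | succ w hw ih => exact le_trans (A.content_fill_succ_le (by omega)) ih

lemma content_fill_zero {b : Bool} {v : ℕ} (hz : ∀ x ∈ A.cells, A.fill b x < v) :
    A.content (A.fill b) v = 0 := by
  rw [content, Finset.card_eq_zero, Finset.filter_eq_empty_iff]
  intro x hx
  have := hz x hx
  omega

/-- Cells realize all column positions below a given one. -/
lemma cpos_downward : ∀ n : ℕ, ∀ x ∈ A.cells, n ≤ A.cpos x →
    ∃ y ∈ A.cells, A.cpos y = A.cpos x - n := by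
  intro n
  induction n with
  | zero => exact fun x hx _ => ⟨x, hx, by omega⟩
  | succ n ih =>
    intro x hx hn
    obtain ⟨y, hy, hcy⟩ := ih x hx (by omega)
    have h1 : 1 ≤ A.cpos y := by omega
    obtain ⟨⟨hmem, -⟩, -⟩ := A.arow_spec hy h1
    have := A.cpos_arow hy h1
    exact ⟨(A.arow y, y.2), hmem, by omega⟩

/-- Characterization of top cells via `cpos`. -/
lemma cpos_eq_zero_iff {x : ℕ × ℕ} (hx : x ∈ A.cells) :
    A.cpos x = 0 ↔ x ∈ A.tops := by
  rw [mem_tops_iff, cpos, Finset.card_eq_zero, Finset.filter_eq_empty_iff]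
  constructor
  · intro h
    refine ⟨hx, fun i' hi' hmem => ?_⟩
    exact h hmem ⟨rfl, hi'⟩
  · rintro ⟨-, h⟩ z hz ⟨hz2, hz1⟩
    have : (z.1, x.2) = z := Prod.ext rfl hz2.symm
    exact h z.1 hz1 (this ▸ hz)

/-- Content of 1s in the unbumped filling: number of columns. -/
lemma content_fill_false_one : A.content (A.fill false) 1 = A.numCols := by
  rw [content, ← A.tops_card]
  congr 1
  apply Finset.ext
  intro x
  rw [Finset.mem_filter]
  constructor
  · rintro ⟨hx, hfx⟩
    rw [fill_false] at hfx
    exact (A.cpos_eq_zero_iff hx).1 (by omega)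
  · intro hx
    have hxc := (A.mem_tops_iff.1 hx).1
    refine ⟨hxc, ?_⟩
    rw [fill_false]
    have := (A.cpos_eq_zero_iff hxc).2 hx
    omega

/-- Content of 1s in the bumped filling: columns minus breaks. -/
lemma content_fill_true_one : A.content (A.fill true) 1 + A.nbrks = A.numCols := by
  classical
  set bcells : Finset (ℕ × ℕ) := A.brks.image (fun b => (b, A.outer.rowLen b - 1)) with hbc
  have hbsub : bcells ⊆ A.tops := by
    intro x hxm
    rw [hbc, Finset.mem_image] at hxm
    obtain ⟨b, hb, rfl⟩ := hxm
    exact ((A.top_last_iff_brk (A.brks_subset_rowSet hb)).2 hb).1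
  have hbcard : bcells.card = A.nbrks := by
    rw [hbc, nbrks]
    apply Finset.card_image_of_injOn
    intro b _ b' _ h
    exact congrArg Prod.fst h
  have hone : A.cells.filter (fun c => A.fill true c = 1) = A.tops \ bcells := by
    apply Finset.ext
    intro x
    rw [Finset.mem_filter, Finset.mem_sdiff]
    constructor
    · rintro ⟨hx, hfx⟩
      have hcp : A.cpos x + 1 ≤ 1 := by
        have : A.cpos x + 1 ≤ A.fill true x := le_max_left _ _
        omega
      refine ⟨(A.cpos_eq_zero_iff hx).1 (by omega), ?_⟩
      intro hmem
      rw [hbc, Finset.mem_image] at hmem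
      obtain ⟨b, hb, hbe⟩ := hmem
      have hbrow := A.brks_subset_rowSet hb
      have hbne := (A.mem_rowSet_iff).1 hbrow
      have hlast : x.2 + 1 = A.outer.rowLen x.1 := by
        rw [← hbe]; simp only; omega
      have hfill := A.fill_last hx hlast
      have hrk : 0 < A.rank x.1 := by
        have hx1 : x.1 = b := by rw [← hbe]
        rw [hx1]
        obtain ⟨-, ⟨a, ha, hab⟩, -⟩ := (A.mem_brks_iff).1 hb
        rw [rank, Finset.card_pos]
        exact ⟨a, Finset.mem_filter.2 ⟨ha, hab⟩⟩
      omega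
    · rintro ⟨hxt, hxnb⟩
      have hx := (A.mem_tops_iff.1 hxt).1
      have hcp := (A.cpos_eq_zero_iff hx).2 hxt
      refine ⟨hx, ?_⟩
      rw [fill]
      split
      · rename_i hcond
        obtain ⟨-, hlast⟩ := hcond
        rcases Nat.eq_zero_or_pos (A.rank x.1) with hr | hr
        · rw [hr]
          omega
        · exfalso
          apply hxnb
          rw [hbc, Finset.mem_image]
          refine ⟨x.1, ?_, Prod.ext rfl (by omega)⟩
          apply (A.top_last_iff_brk (A.fst_mem_rowSet hx)).1
          refine ⟨?_, hr⟩
          have hxe : (x.1, A.outer.rowLen x.1 - 1) = x := Prod.ext rfl (by omega)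
          rw [hxe]
          exact hxt
      · omega
  rw [content, hone]
  have hts := Finset.card_sdiff_add_card_eq_card hbsub
  rw [hbcard, A.tops_card] at hts
  exact hts

end SkewShape
namespace SkewShape

variable (A : SkewShape)

lemma numRows_pos (hne : A.cells.Nonempty) : 1 ≤ A.numRows := by
  obtain ⟨x, hx⟩ := hne
  rw [numRows, Nat.one_le_iff_ne_zero, ← Nat.pos_iff_ne_zero, Finset.card_pos]
  exact ⟨x.1, A.fst_mem_rowSet hx⟩

lemma content_fill_true_pos {v : ℕ} (hv : 1 ≤ v) (hvR : v ≤ A.numRows) :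
    1 ≤ A.content (A.fill true) v := by
  obtain ⟨i, hi, hik⟩ := A.exists_rank_eq (k := v - 1) (by omega)
  have hrow := (A.mem_rowSet_iff).1 hi
  have hx : (i, A.outer.rowLen i - 1) ∈ A.cells := A.mem_cells_iff.2 (by omega)
  rw [A.content_pos_iff]
  refine ⟨_, hx, ?_⟩
  rw [A.fill_last hx (by simp only; omega)]
  simp only
  omega

lemma content_fill_true_zero {v : ℕ} (hv : A.numRows < v) :
    A.content (A.fill true) v = 0 := by
  apply content_fill_zero
  intro x hx
  have h1 := A.fill_le (b := true) hx
  have h2 := A.rank_lt_numRows (A.fst_mem_rowSet hx)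
  omega

lemma content_fill_false_pos (hne : A.cells.Nonempty) {v : ℕ} (hv : 1 ≤ v)
    (hvH : v ≤ A.cells.sup A.cpos + 1) : 1 ≤ A.content (A.fill false) v := by
  obtain ⟨x, hx, hsup⟩ := Finset.exists_mem_eq_sup A.cells hne A.cpos
  obtain ⟨y, hy, hcy⟩ := A.cpos_downward (A.cpos x - (v - 1)) x hx (by omega)
  rw [A.content_pos_iff]
  refine ⟨y, hy, ?_⟩
  rw [fill_false]
  omega

lemma content_fill_false_zero {v : ℕ} (hv : A.cells.sup A.cpos + 1 < v) :
    A.content (A.fill false) v = 0 := by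
  apply content_fill_zero
  intro x hx
  rw [fill_false]
  have : A.cpos x ≤ A.cells.sup A.cpos := Finset.le_sup hx
  omega

lemma exists_supp_lam (b : Bool) (N : ℕ) (hN : 1 ≤ N)
    (hpos : ∀ v, 1 ≤ v → v ≤ N → 1 ≤ A.content (A.fill b) v)
    (hzero : ∀ v, N < v → A.content (A.fill b) v = 0) :
    ∃ lam : Multiset ℕ, lam ∈ A.supp ∧ Multiset.card lam = N ∧
      part lam 0 = A.content (A.fill b) 1 := by
  classical
  set l : List ℕ := (List.range N).map (fun k => A.content (A.fill b) (k + 1)) with hl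
  have hlen : l.length = N := by rw [hl, List.length_map, List.length_range]
  have hsorted : l.Pairwise (· ≥ ·) := by
    apply List.Pairwise.map _ _ (List.pairwise_lt_range (n := N))
    intro a c hac
    exact A.content_fill_anti (by omega) (by omega)
  set lam : Multiset ℕ := (l : Multiset ℕ) with hlam
  have hsort : lam.sort (· ≥ ·) = l := by
    apply List.Perm.eq_of_pairwise' (Multiset.pairwise_sort _ _) hsorted
      (Multiset.coe_eq_coe.mp (Multiset.sort_eq _ _))
  have hpart : ∀ i, part lam i = l.getD i 0 := by
    intro i
    rw [part, hsort]
  have hgd : ∀ (f : ℕ → ℕ) (i : ℕ), i < N → ((List.range N).map f).getD i 0 = f i := by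
    intro f i h
    rw [List.getD_eq_getElem _ _ (by simp only [List.length_map, List.length_range]; omega)]
    simp
  have hpartval : ∀ i, part lam i = A.content (A.fill b) (i + 1) := by
    intro i
    rw [hpart i]
    rcases Nat.lt_or_ge i N with h | h
    · rw [hl, hgd _ i h]
    · rw [List.getD_eq_default _ _ (by omega), hzero (i + 1) (by omega)]
  have h0 : (0 : ℕ) ∉ lam := by
    rw [hlam, Multiset.mem_coe, hl, List.mem_map]
    rintro ⟨k, hk, heq⟩
    rw [List.mem_range] at hk
    have := hpos (k + 1) (by omega) (by omega)
    omega
  refine ⟨lam, ⟨h0, A.fill b, A.fill_isLR b, fun i => (hpartval i).symm⟩, ?_, ?_⟩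
  · rw [hlam, Multiset.coe_card, hlen]
  · rw [hpartval 0]

lemma exists_lam_true (hne : A.cells.Nonempty) : ∃ lam ∈ A.supp,
    Multiset.card lam = A.numRows ∧ part lam 0 + A.nbrks = A.numCols := by
  obtain ⟨lam, hmem, hcard, hpart⟩ := A.exists_supp_lam true A.numRows (A.numRows_pos hne)
    (fun v hv1 hv2 => A.content_fill_true_pos hv1 hv2)
    (fun v hv => A.content_fill_true_zero hv)
  refine ⟨lam, hmem, hcard, ?_⟩
  rw [hpart]
  exact A.content_fill_true_one

lemma exists_lam_false (hne : A.cells.Nonempty) :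
    ∃ lam ∈ A.supp, part lam 0 = A.numCols := by
  obtain ⟨lam, hmem, hcard, hpart⟩ := A.exists_supp_lam false (A.cells.sup A.cpos + 1)
    (by omega)
    (fun v hv1 hv2 => A.content_fill_false_pos hne hv1 hv2)
    (fun v hv => A.content_fill_false_zero hv)
  refine ⟨lam, hmem, ?_⟩
  rw [hpart]
  exact A.content_fill_false_one

end SkewShape
namespace SkewShape

variable (A : SkewShape)

lemma empty_iff_zero_mem : A.cells = ∅ ↔ (0 : Multiset ℕ) ∈ A.supp := by
  have hpart0 : ∀ i, part (0 : Multiset ℕ) i = 0 := by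
    intro i
    rw [part, Multiset.sort_zero]
    simp
  constructor
  · intro h
    refine ⟨Multiset.notMem_zero 0, fun _ => 1, ⟨⟨fun c _ => le_refl 1, ?_, ?_⟩, ?_⟩, ?_⟩
    · intro i j j' _ _ _
      exact le_refl 1
    · intro i i' j hij _ _
      rw [h] at hij
      exact absurd hij (Finset.notMem_empty _)
    · intro d hd
      rw [h] at hd
      exact absurd hd (Finset.notMem_empty _)
    · intro i
      rw [content, h, hpart0]
      simp
  · rintro ⟨h0, T, hLR, hcont⟩
    rw [Finset.eq_empty_iff_forall_notMem]
    intro x hx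
    have hv : 1 ≤ T x := hLR.1.1 x hx
    have h1 : 1 ≤ A.content T (T x) := (A.content_pos_iff).2 ⟨x, hx, rfl⟩
    have hc := hcont (T x - 1)
    have he : T x - 1 + 1 = T x := by omega
    rw [he] at hc
    rw [hpart0] at hc
    omega

end SkewShape

/-- The invariant of a support that computes the number of components. -/
noncomputable def suppInv (S : Set (Multiset ℕ)) : ℕ :=
  letI := Classical.dec ((0 : Multiset ℕ) ∈ S)
  if (0 : Multiset ℕ) ∈ S then 0
  else sSup ((fun ν => part ν 0) '' S) + 1 -
    sSup ((fun ν => part ν 0) '' {ν ∈ S | Multiset.card ν = sSup (Multiset.card '' S)})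

namespace SkewShape

lemma numComponents_eq_suppInv (A : SkewShape) : A.numComponents = suppInv A.supp := by
  by_cases h0 : (0 : Multiset ℕ) ∈ A.supp
  · unfold suppInv
    rw [if_pos h0, A.numComponents_empty ((A.empty_iff_zero_mem).2 h0)]
  · have hne : A.cells.Nonempty :=
      Finset.nonempty_iff_ne_empty.2 (fun h => h0 ((A.empty_iff_zero_mem).1 h))
    unfold suppInv
    rw [if_neg h0]
    obtain ⟨lamT, hmemT, hcardT, hpartT⟩ := A.exists_lam_true hne
    obtain ⟨lamF, hmemF, hpartF⟩ := A.exists_lam_false hne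
    -- the maximal number of parts is numRows
    have hLbdd : ∀ m ∈ Multiset.card '' A.supp, m ≤ A.numRows := by
      rintro m ⟨ν, hν, rfl⟩
      obtain ⟨h0', T, hLR, hcont⟩ := hν
      exact A.card_le_numRows hLR h0' hcont
    have hL : sSup (Multiset.card '' A.supp) = A.numRows := by
      apply le_antisymm
      · exact csSup_le ⟨A.numRows, ⟨lamT, hmemT, hcardT⟩⟩ hLbdd
      · exact le_csSup ⟨A.numRows, hLbdd⟩ ⟨lamT, hmemT, hcardT⟩
    -- the maximal first part is numCols
    have hWbdd : ∀ m ∈ (fun ν => part ν 0) '' A.supp, m ≤ A.numCols := by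
      rintro m ⟨ν, hν, rfl⟩
      obtain ⟨h0', T, hLR, hcont⟩ := hν
      have h2 : A.content T 1 = part ν 0 := by simpa using hcont 0
      have h1 := A.content_one_le hLR
      simp only
      omega
    have hW : sSup ((fun ν => part ν 0) '' A.supp) = A.numCols := by
      apply le_antisymm
      · exact csSup_le ⟨A.numCols, ⟨lamF, hmemF, hpartF⟩⟩ hWbdd
      · exact le_csSup ⟨A.numCols, hWbdd⟩ ⟨lamF, hmemF, hpartF⟩
    rw [hL, hW]
    -- the maximal first part among maximal-length elements
    have hGbdd : ∀ m ∈ (fun ν => part ν 0) ''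
        {ν ∈ A.supp | Multiset.card ν = A.numRows}, m ≤ A.numCols - A.nbrks := by
      rintro m ⟨ν, ⟨hν, hνcard⟩, rfl⟩
      obtain ⟨h0', T, hLR, hcont⟩ := hν
      have := A.part_zero_add_nbrks_le hLR h0' hcont hνcard
      simp only
      omega
    have hGmem : part lamT 0 ∈ (fun ν => part ν 0) ''
        {ν ∈ A.supp | Multiset.card ν = A.numRows} := ⟨lamT, ⟨hmemT, hcardT⟩, rfl⟩
    have hG : sSup ((fun ν => part ν 0) ''
        {ν ∈ A.supp | Multiset.card ν = A.numRows}) = A.numCols - A.nbrks := by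
      apply le_antisymm
      · apply csSup_le ⟨part lamT 0, hGmem⟩ hGbdd
      · have : part lamT 0 = A.numCols - A.nbrks := by omega
        rw [← this]
        exact le_csSup ⟨A.numCols - A.nbrks, hGbdd⟩ hGmem
    rw [hG, A.numComponents_eq_nbrks hne]
    have := A.nbrks_le_numCols
    omega

end SkewShape

/-- If `A` and `B` are skew shapes with `supp A = supp B`, then `A`
and `B` have the same number of connected components. -/
theorem supp_eq_numComponents (A B : SkewShape) (h : A.supp = B.supp) :
    A.numComponents = B.numComponents := by
  rw [SkewShape.numComponents_eq_suppInv A, SkewShape.numComponents_eq_suppInv B, h]
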